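/- arXiv:2305.09467 — 2 statements merged into one kernel-verified Lean document; each statement's English description precedes it below -/
import Mathlib

section
/- (Norm decrease lower bound, ratio version.) Let x ∈ ℝ^p have strictly positive entries, let M ⊂ {1,…,p} with |M| = m > 0, let h satisfy 0 < h ≤ x̄/2 where x̄ = (1/m)∑_{i∈M} x_i, and assume also h < min_{i∈M} x_i; define y ∈ ℝ^p by y_i = x_i − h for i ∈ M and y_i = x_i otherwise. Then ‖x‖₂ − ‖y‖₂ ≥ (h/2)·(∑_{i∈M} x_i)/‖x‖₂ ≥ 0, where ‖·‖₂ is the Euclidean norm on ℝ^p. -/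
open Finset

/-- **Norm decrease lower bound, ratio version.** If moreover `h ≤ x̄/2`, where `x̄` is the
mean of the entries of `x` over `M`, then the Euclidean norm decreases by at least
`(h/2) · ‖x‖_{1,M} / ‖x‖₂ ≥ 0`. -/
theorem norm_decrease_lower_bound_ratio
    (p : ℕ) (x : Fin p → ℝ) (hx : ∀ i, 0 < x i)
    (M : Finset (Fin p)) (hM : M.Nonempty)
    (h : ℝ) (hh0 : 0 < h)
    (hhalf : h ≤ ((∑ i ∈ M, x i) / M.card) / 2)
    (hhlt : ∀ i ∈ M, h < x i)
    (y : Fin p → ℝ) (hy : ∀ i, y i = if i ∈ M then x i - h else x i) :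
    Real.sqrt (∑ i, (x i) ^ 2) - Real.sqrt (∑ i, (y i) ^ 2) ≥
        (h / 2) * (∑ i ∈ M, x i) / Real.sqrt (∑ i, (x i) ^ 2) ∧
      (h / 2) * (∑ i ∈ M, x i) / Real.sqrt (∑ i, (x i) ^ 2) ≥ 0 := by
  set S := ∑ i, (x i) ^ 2 with hS
  set T := ∑ i, (y i) ^ 2 with hT
  have hp : (univ : Finset (Fin p)).Nonempty := ⟨hM.choose, mem_univ _⟩
  have hSpos : 0 < S := Finset.sum_pos (fun i _ => pow_pos (hx i) 2) hp
  have hsqS : 0 < Real.sqrt S := Real.sqrt_pos.2 hSpos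
  have hy2 : ∀ i, (y i) ^ 2 ≤ (x i) ^ 2 := by
    intro i
    rw [hy]
    split
    · rename_i hi
      have h1 := hhlt i hi
      nlinarith [hx i]
    · exact le_rfl
  have hTS : T ≤ S := Finset.sum_le_sum fun i _ => hy2 i
  have hTnn : 0 ≤ T := Finset.sum_nonneg fun i _ => sq_nonneg _
  have hmpos : 0 < (M.card : ℝ) := by
    exact_mod_cast Finset.card_pos.2 hM
  have hsumx : (M.card : ℝ) * h ≤ ∑ i ∈ M, x i := by
    rw [div_div] at hhalf
    have := (le_div_iff₀ (by positivity)).1 hhalf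
    nlinarith
  have key : S - T ≥ h * ∑ i ∈ M, x i := by
    have hST : S - T = ∑ i ∈ M, ((x i) ^ 2 - (y i) ^ 2) := by
      rw [hS, hT, ← Finset.sum_sub_distrib]
      rw [← Finset.sum_subset (Finset.subset_univ M)]
      intro i _ hi
      rw [hy]
      simp [hi]
    have hterm : ∑ i ∈ M, ((x i) ^ 2 - (y i) ^ 2)
        = 2 * h * (∑ i ∈ M, x i) - (M.card : ℝ) * h ^ 2 := by
      rw [Finset.sum_congr rfl (fun i hi =>
        show x i ^ 2 - y i ^ 2 = 2 * h * x i - h ^ 2 by rw [hy, if_pos hi]; ring)]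
      rw [Finset.sum_sub_distrib, ← Finset.mul_sum, Finset.sum_const, nsmul_eq_mul]
    rw [hST, hterm]
    nlinarith
  have hsqT : Real.sqrt T ≤ Real.sqrt S := Real.sqrt_le_sqrt hTS
  have hsqS2 : Real.sqrt S ^ 2 = S := Real.sq_sqrt hSpos.le
  have hsqT2 : Real.sqrt T ^ 2 = T := Real.sq_sqrt hTnn
  have main : Real.sqrt S - Real.sqrt T ≥ (S - T) / (2 * Real.sqrt S) := by
    rw [ge_iff_le, div_le_iff₀ (by positivity)]
    nlinarith [sq_nonneg (Real.sqrt S - Real.sqrt T), Real.sqrt_nonneg T]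
  constructor
  · refine le_trans ?_ main
    rw [div_le_div_iff₀ (by positivity) (by positivity)]
    nlinarith
  · have hsum0 : 0 ≤ ∑ i ∈ M, x i := Finset.sum_nonneg fun i hi => (hx i).le
    positivity
end

section
/- (Norm increase upper bound when filling zeros.) Let x ∈ ℝ^p have nonnegative entries with M = {i : x_i = 0} nonempty of size m, and suppose x has at least one nonzero entry. Let 0 < h ≤ 1, and define y ∈ ℝ^p by y_i = h for i ∈ M and y_i = x_i otherwise. Then 0 ≥ ‖x‖₂ − ‖y‖₂ ≥ −hm/(2‖x‖₂), where ‖·‖₂ is the Euclidean norm on ℝ^p. -/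
open Finset

/-- **Norm increase upper bound when filling zeros.** Replacing the zero coordinates of `x`
(of which there are `m ≥ 1`) by `h ∈ (0, 1]` increases the Euclidean norm by at most
`hm/(2‖x‖₂)`. -/
theorem norm_increase_upper_bound_fill_zeros
    (p : ℕ) (x : Fin p → ℝ) (hx0 : ∀ i, 0 ≤ x i)
    (M : Finset (Fin p)) (hMdef : M = Finset.univ.filter fun i => x i = 0)
    (hM : M.Nonempty) (hxne : ∃ i, x i ≠ 0)
    (h : ℝ) (hh0 : 0 < h) (hh1 : h ≤ 1)
    (y : Fin p → ℝ) (hy : ∀ i, y i = if i ∈ M then h else x i) :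
    0 ≥ Real.sqrt (∑ i, (x i) ^ 2) - Real.sqrt (∑ i, (y i) ^ 2) ∧
      Real.sqrt (∑ i, (x i) ^ 2) - Real.sqrt (∑ i, (y i) ^ 2) ≥
        -(h * M.card) / (2 * Real.sqrt (∑ i, (x i) ^ 2)) := by
  set S := ∑ i, (x i) ^ 2 with hS
  set T := ∑ i, (y i) ^ 2 with hT
  set m : ℝ := (M.card : ℝ) with hm
  have hm1 : (1 : ℝ) ≤ m := by
    have := hM.card_pos
    rw [hm]; exact_mod_cast this
  -- T = S + m * h^2
  have hTS : T = S + m * h ^ 2 := by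
    have hTsplit : T = ∑ i ∈ M, (y i) ^ 2 + ∑ i ∈ Mᶜ, (y i) ^ 2 :=
      (Finset.sum_add_sum_compl M _).symm
    have hSsplit : S = ∑ i ∈ M, (x i) ^ 2 + ∑ i ∈ Mᶜ, (x i) ^ 2 :=
      (Finset.sum_add_sum_compl M _).symm
    have h1 : ∑ i ∈ M, (y i) ^ 2 = m * h ^ 2 := by
      rw [Finset.sum_congr rfl fun i hi => by rw [hy i, if_pos hi]]
      simp [hm, mul_comm]
    have h2 : ∑ i ∈ Mᶜ, (y i) ^ 2 = ∑ i ∈ Mᶜ, (x i) ^ 2 := by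
      refine Finset.sum_congr rfl fun i hi => ?_
      rw [hy i, if_neg (by simpa using hi)]
    have h3 : ∑ i ∈ M, (x i) ^ 2 = 0 := by
      refine Finset.sum_eq_zero fun i hi => ?_
      have : x i = 0 := by
        rw [hMdef] at hi; simpa using hi
      simp [this]
    rw [hTsplit, h1, h2, hSsplit, h3]
    ring
  obtain ⟨j, hj⟩ := hxne
  have hSpos : 0 < S := by
    have hle : (x j) ^ 2 ≤ S := by
      apply Finset.single_le_sum (fun i _ => sq_nonneg (x i)) (Finset.mem_univ j)
    have : 0 < (x j) ^ 2 := by positivity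
    linarith
  have hsSpos : 0 < Real.sqrt S := Real.sqrt_pos.mpr hSpos
  have hST : S ≤ T := by
    nlinarith [sq_nonneg h]
  have hsqle : Real.sqrt S ≤ Real.sqrt T := Real.sqrt_le_sqrt hST
  constructor
  · linarith
  · -- need Real.sqrt T ≤ Real.sqrt S + h*m/(2*Real.sqrt S)
    have hc : (0:ℝ) ≤ Real.sqrt S + h * m / (2 * Real.sqrt S) := by positivity
    have hkey : Real.sqrt T ≤ Real.sqrt S + h * m / (2 * Real.sqrt S) := by
      have hT2 : T ≤ (Real.sqrt S + h * m / (2 * Real.sqrt S)) ^ 2 := by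
        have hsq : Real.sqrt S ^ 2 = S := Real.sq_sqrt hSpos.le
        have hexp : (Real.sqrt S + h * m / (2 * Real.sqrt S)) ^ 2 =
            S + h * m + (h * m / (2 * Real.sqrt S)) ^ 2 := by
          field_simp
          nlinarith [hsq]
        rw [hexp, hTS]
        have : m * h ^ 2 ≤ h * m := by nlinarith
        nlinarith [sq_nonneg (h * m / (2 * Real.sqrt S))]
      calc Real.sqrt T ≤ Real.sqrt ((Real.sqrt S + h * m / (2 * Real.sqrt S)) ^ 2) :=
            Real.sqrt_le_sqrt hT2
        _ = Real.sqrt S + h * m / (2 * Real.sqrt S) := Real.sqrt_sq hc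
    have : -(h * m) / (2 * Real.sqrt S) = -(h * m / (2 * Real.sqrt S)) := by ring
    rw [ge_iff_le, this]
    linarith
end
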